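/- For a monotone submodular function f: 2^V → ℝ≥0, any X ⊆ V, and any Y ⊆ V, the modular function m²_{f,X}(Y) := f(X) − Σ_{j ∈ X∖Y} f(j | V∖{j}) + Σ_{j ∈ Y∖X} f(j | X) satisfies m²_{f,X}(Y) ≥ f(Y), and m²_{f,X}(X) = f(X). -/
import Mathlib


/-- Marginal gain f(j | A) = f(A ∪ {j}) − f(A). -/
def marg {V : Type*} [DecidableEq V] (f : Finset V → ℝ) (j : V) (A : Finset V) : ℝ :=
  f (insert j A) - f A

lemma lemA {V : Type*} [DecidableEq V] (f : Finset V → ℝ)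
    (hsub : ∀ A B : Finset V, A ⊆ B → ∀ e ∉ B,
      f (insert e A) - f A ≥ f (insert e B) - f B)
    (X : Finset V) :
    ∀ S : Finset V, Disjoint S X → f (X ∪ S) ≤ f X + ∑ j ∈ S, marg f j X := by
  intro S
  induction S using Finset.induction_on with
  | empty => simp
  | @insert a S ha ih =>
    intro hd
    have hdS : Disjoint S X := (Finset.disjoint_insert_left.mp hd).2
    have haX : a ∉ X := (Finset.disjoint_insert_left.mp hd).1
    have hnot : a ∉ X ∪ S := by simp [haX, ha]
    have h1 := hsub X (X ∪ S) Finset.subset_union_left a hnot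
    have h2 := ih hdS
    have : X ∪ insert a S = insert a (X ∪ S) := by
      ext x; simp [or_comm, or_left_comm]
    rw [this, Finset.sum_insert ha]
    have : marg f a X = f (insert a X) - f X := rfl
    rw [this]
    linarith

lemma lemB {V : Type*} [Fintype V] [DecidableEq V] (f : Finset V → ℝ)
    (hsub : ∀ A B : Finset V, A ⊆ B → ∀ e ∉ B,
      f (insert e A) - f A ≥ f (insert e B) - f B) :
    ∀ T A : Finset V, T ⊆ A →
      f (A \ T) ≤ f A - ∑ j ∈ T, marg f j (Finset.univ.erase j) := by
  intro T
  induction T using Finset.induction_on with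
  | empty => simp
  | @insert a T ha ih =>
    intro A hTA
    have haA : a ∈ A := hTA (Finset.mem_insert_self a T)
    have hTA' : T ⊆ A := fun x hx => hTA (Finset.mem_insert_of_mem hx)
    have haAT : a ∈ A \ T := Finset.mem_sdiff.mpr ⟨haA, ha⟩
    have hkey : A \ insert a T = (A \ T).erase a := by
      ext x; simp [Finset.mem_sdiff, Finset.mem_erase, and_comm, and_left_comm,
        not_or, and_assoc]
    have hne : a ∉ (Finset.univ.erase a : Finset V) := Finset.notMem_erase a _
    have hss : (A \ T).erase a ⊆ Finset.univ.erase a :=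
      Finset.erase_subset_erase a (Finset.subset_univ _)
    have h1 := hsub ((A \ T).erase a) (Finset.univ.erase a) hss a hne
    have h2 : insert a ((A \ T).erase a) = A \ T := Finset.insert_erase haAT
    have h3 := ih A hTA'
    rw [hkey, Finset.sum_insert ha]
    have hm : marg f a (Finset.univ.erase a)
        = f (insert a (Finset.univ.erase a)) - f (Finset.univ.erase a) := rfl
    rw [h2] at h1
    rw [hm] at *
    linarith

theorem stmt9 {V : Type*} [Fintype V] [DecidableEq V] (f : Finset V → ℝ)
    (hnn : ∀ A : Finset V, 0 ≤ f A)
    (hmono : ∀ A B : Finset V, A ⊆ B → f A ≤ f B)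
    (hsub : ∀ A B : Finset V, A ⊆ B → ∀ e ∉ B,
      f (insert e A) - f A ≥ f (insert e B) - f B)
    (X : Finset V) :
    (∀ Y : Finset V,
      f X - (∑ j ∈ X \ Y, marg f j (Finset.univ.erase j)) + (∑ j ∈ Y \ X, marg f j X)
        ≥ f Y) ∧
    (f X - (∑ j ∈ X \ X, marg f j (Finset.univ.erase j)) + (∑ j ∈ X \ X, marg f j X)
      = f X) := by
  constructor
  · intro Y
    have hA := lemA f hsub X (Y \ X) (Finset.sdiff_disjoint)
    have hB := lemB f hsub (X \ Y) (X ∪ Y) (Finset.sdiff_subset.trans Finset.subset_union_left)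
    have h1 : X ∪ (Y \ X) = X ∪ Y := Finset.union_sdiff_self_eq_union
    have h2 : (X ∪ Y) \ (X \ Y) = Y := by
      ext x; simp [Finset.mem_sdiff, Finset.mem_union]; tauto
    rw [h1] at hA
    rw [h2] at hB
    linarith
  · simp
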